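/- arXiv:1803.08847 — 2 statements merged into one kernel-verified Lean document; each statement's English description precedes it below -/
import Mathlib

section
/- Let r : [0,2π]² → ℝ be continuous and strictly positive with r(l, l_J) = r(2π − l, 2π − l_J) and r(2π − l, l_J) = r(l, 2π − l_J) for all l, l_J ∈ [0, 2π]. Let x : [0,2π] → ℝ with x(2π − l) = x(l) and y_J : [0,2π] → ℝ with y_J(2π − l_J) = −y_J(l_J). Then ∫₀^{2π}∫₀^{2π} x(l)·y_J(l_J)/r(l,l_J)³ dl dl_J = 0. -/
open Real intervalIntegral Set

theorem stmt_5 (r : ℝ → ℝ → ℝ) (x yJ : ℝ → ℝ)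
    (hr : ContinuousOn (fun p : ℝ × ℝ => r p.1 p.2) (Icc 0 (2 * π) ×ˢ Icc 0 (2 * π)))
    (hrpos : ∀ l ∈ Icc (0:ℝ) (2 * π), ∀ lJ ∈ Icc (0:ℝ) (2 * π), 0 < r l lJ)
    (hrsym1 : ∀ l ∈ Icc (0:ℝ) (2 * π), ∀ lJ ∈ Icc (0:ℝ) (2 * π),
        r l lJ = r (2 * π - l) (2 * π - lJ))
    (hrsym2 : ∀ l ∈ Icc (0:ℝ) (2 * π), ∀ lJ ∈ Icc (0:ℝ) (2 * π),
        r (2 * π - l) lJ = r l (2 * π - lJ))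
    (hx : ∀ l ∈ Icc (0:ℝ) (2 * π), x (2 * π - l) = x l)
    (hyJ : ∀ lJ ∈ Icc (0:ℝ) (2 * π), yJ (2 * π - lJ) = -yJ lJ) :
    ∫ l in (0:ℝ)..(2 * π), ∫ lJ in (0:ℝ)..(2 * π), x l * yJ lJ / (r l lJ) ^ 3 = 0 := by
  have hπ : (0:ℝ) ≤ 2 * π := by positivity
  set F : ℝ → ℝ → ℝ := fun l lJ => x l * yJ lJ / (r l lJ) ^ 3 with hF
  set I : ℝ := ∫ l in (0:ℝ)..(2 * π), ∫ lJ in (0:ℝ)..(2 * π), F l lJ with hI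
  -- reflect both variables
  have hrefl : I = ∫ l in (0:ℝ)..(2 * π), ∫ lJ in (0:ℝ)..(2 * π),
      F (2 * π - l) (2 * π - lJ) := by
    have houter : ∀ g : ℝ → ℝ,
        (∫ l in (0:ℝ)..(2 * π), g l) = ∫ l in (0:ℝ)..(2 * π), g (2 * π - l) := by
      intro g
      rw [intervalIntegral.integral_comp_sub_left g (2 * π)]
      norm_num
    rw [hI]
    rw [houter (fun l => ∫ lJ in (0:ℝ)..(2 * π), F l lJ)]
    refine intervalIntegral.integral_congr (fun l hl => ?_)
    exact houter (fun lJ => F (2 * π - l) lJ)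
  have hneg : (∫ l in (0:ℝ)..(2 * π), ∫ lJ in (0:ℝ)..(2 * π),
      F (2 * π - l) (2 * π - lJ)) = -I := by
    have : (∫ l in (0:ℝ)..(2 * π), ∫ lJ in (0:ℝ)..(2 * π),
        F (2 * π - l) (2 * π - lJ)) = ∫ l in (0:ℝ)..(2 * π), ∫ lJ in (0:ℝ)..(2 * π),
        -F l lJ := by
      refine intervalIntegral.integral_congr (fun l hl => ?_)
      rw [uIcc_of_le hπ] at hl
      refine intervalIntegral.integral_congr (fun lJ hlJ => ?_)
      rw [uIcc_of_le hπ] at hlJ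
      have hx' := hx l hl
      have hy' := hyJ lJ hlJ
      have hr' := hrsym1 l hl lJ hlJ
      simp only [hF, hx', hy', ← hr']
      ring
    rw [this, hI]
    simp [intervalIntegral.integral_neg]
  have : I = -I := hrefl.trans hneg
  have : I = 0 := by linarith
  exact this
end

section
/- Let r : [0,2π]² → ℝ be continuous and strictly positive with r(l, l_J) = r(2π − l, 2π − l_J) and r(2π − l, l_J) = r(l, 2π − l_J). Let y : [0,2π] → ℝ with y(2π − l) = −y(l) and x_J : [0,2π] → ℝ with x_J(2π − l_J) = x_J(l_J). Then ∫₀^{2π}∫₀^{2π} y(l)·x_J(l_J)/r(l,l_J)³ dl dl_J = 0. -/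
open Real intervalIntegral Set

theorem stmt_6 (r : ℝ → ℝ → ℝ) (y xJ : ℝ → ℝ)
    (hr : ContinuousOn (fun p : ℝ × ℝ => r p.1 p.2) (Icc 0 (2 * π) ×ˢ Icc 0 (2 * π)))
    (hrpos : ∀ l ∈ Icc (0:ℝ) (2 * π), ∀ lJ ∈ Icc (0:ℝ) (2 * π), 0 < r l lJ)
    (hrsym1 : ∀ l ∈ Icc (0:ℝ) (2 * π), ∀ lJ ∈ Icc (0:ℝ) (2 * π),
        r l lJ = r (2 * π - l) (2 * π - lJ))
    (hrsym2 : ∀ l ∈ Icc (0:ℝ) (2 * π), ∀ lJ ∈ Icc (0:ℝ) (2 * π),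
        r (2 * π - l) lJ = r l (2 * π - lJ))
    (hy : ∀ l ∈ Icc (0:ℝ) (2 * π), y (2 * π - l) = -y l)
    (hxJ : ∀ lJ ∈ Icc (0:ℝ) (2 * π), xJ (2 * π - lJ) = xJ lJ) :
    ∫ l in (0:ℝ)..(2 * π), ∫ lJ in (0:ℝ)..(2 * π), y l * xJ lJ / (r l lJ) ^ 3 = 0 := by
  have hπ : (0:ℝ) ≤ 2 * π := by positivity
  set g : ℝ → ℝ := fun l => ∫ lJ in (0:ℝ)..(2 * π), y l * xJ lJ / (r l lJ) ^ 3 with hg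
  -- antisymmetry of g on [0, 2π]
  have key : ∀ l ∈ Icc (0:ℝ) (2 * π), g (2 * π - l) = - g l := by
    intro l hl
    have step1 : g (2 * π - l)
        = ∫ lJ in (0:ℝ)..(2 * π), -(y l * xJ lJ) / (r l (2 * π - lJ)) ^ 3 := by
      apply intervalIntegral.integral_congr
      intro t ht
      rw [uIcc_of_le hπ] at ht
      dsimp only
      rw [hy l hl, hrsym2 l hl t ht]
      ring
    have step2 : (∫ lJ in (0:ℝ)..(2 * π), -(y l * xJ lJ) / (r l (2 * π - lJ)) ^ 3)
        = ∫ lJ in (0:ℝ)..(2 * π), -(y l * xJ (2 * π - lJ)) / (r l lJ) ^ 3 := by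
      have := intervalIntegral.integral_comp_sub_left
        (a := (0:ℝ)) (b := 2 * π)
        (fun u => -(y l * xJ (2 * π - u)) / (r l u) ^ 3) (2 * π)
      simpa using this
    have step3 : (∫ lJ in (0:ℝ)..(2 * π), -(y l * xJ (2 * π - lJ)) / (r l lJ) ^ 3)
        = ∫ lJ in (0:ℝ)..(2 * π), -(y l * xJ lJ / (r l lJ) ^ 3) := by
      apply intervalIntegral.integral_congr
      intro t ht
      rw [uIcc_of_le hπ] at ht
      dsimp only
      rw [hxJ t ht]
      ring
    rw [step1, step2, step3, intervalIntegral.integral_neg]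
  have flip : (∫ l in (0:ℝ)..(2 * π), g l) = ∫ l in (0:ℝ)..(2 * π), g (2 * π - l) := by
    have := intervalIntegral.integral_comp_sub_left (a := (0:ℝ)) (b := 2 * π) g (2 * π)
    simpa using this.symm
  have flip2 : (∫ l in (0:ℝ)..(2 * π), g (2 * π - l)) = ∫ l in (0:ℝ)..(2 * π), -(g l) := by
    apply intervalIntegral.integral_congr
    intro t ht
    rw [uIcc_of_le hπ] at ht
    exact key t ht
  have h2 : (∫ l in (0:ℝ)..(2 * π), g l) = -(∫ l in (0:ℝ)..(2 * π), g l) :=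
    flip.trans (flip2.trans (by rw [intervalIntegral.integral_neg]))
  linarith [h2]
end
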